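/- arXiv:2409.16634 — 2 statements merged into one kernel-verified Lean document; each statement's English description precedes it below -/
import Mathlib

section
/- Let U be a unitary operator and δ a bounded operator on a finite-dimensional Hilbert space with r‖δ‖ < 1 for a positive integer r. Then ‖(U+δ)^r − U^r − (∑_{k=0}^{r−1} U^k δ U^{−k}) U^{r−1}‖ ≤ (e/2)·r²‖δ‖², where ‖·‖ is the operator norm. -/
open Matrix Finset
open scoped Matrix.Norms.L2Operator

/-!
Writing `x = ‖δ‖`, the remainder after the zeroth- and first-order terms of `(U + δ) ^ r` is
bounded, by induction on `r` and `‖U ^ k‖ ≤ 1`, by the corresponding remainder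
`(1 + x) ^ r - 1 - r x` of the scalar binomial. Since `(1 + x) ^ r ≤ exp (r x)` and
`exp y - 1 - y ≤ y ^ 2` for `0 ≤ y ≤ 1`, this is at most `(r x) ^ 2 ≤ (e / 2) (r x) ^ 2`.
-/

section NormedRing

variable {R : Type*} [NormedRing R]

theorem sum_range_succ_pow_mul_mul_pow (u b : R) (m : ℕ) :
    ∑ k ∈ range (m + 1), u ^ k * b * u ^ (m + 1 - 1 - k) =
      (∑ k ∈ range m, u ^ k * b * u ^ (m - 1 - k)) * u + u ^ m * b := by
  rw [sum_range_succ, sum_mul, Nat.add_sub_cancel, Nat.sub_self, pow_zero, mul_one]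
  congr 1
  refine sum_congr rfl fun k hk => ?_
  rw [mul_assoc _ (u ^ _), ← pow_succ]
  congr 2
  have := mem_range.1 hk
  omega

theorem norm_sum_pow_mul_mul_pow_le {u : R} (hu : ∀ k, ‖u ^ k‖ ≤ 1) (b : R) (m : ℕ) :
    ‖∑ k ∈ range m, u ^ k * b * u ^ (m - 1 - k)‖ ≤ m * ‖b‖ := by
  calc ‖∑ k ∈ range m, u ^ k * b * u ^ (m - 1 - k)‖
      ≤ ∑ k ∈ range m, ‖u ^ k‖ * ‖b‖ * ‖u ^ (m - 1 - k)‖ :=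
        (norm_sum_le _ _).trans (sum_le_sum fun _ _ => norm_mul₃_le)
    _ ≤ ∑ _k ∈ range m, 1 * ‖b‖ * 1 := by gcongr <;> exact hu _
    _ = m * ‖b‖ := by simp

/-- The remainder `R m` obeys `R (m + 1) = R m * (u + b) + S m * b` with `S m` the first-order sum,
and the scalar remainder of `(1 + x) ^ m` satisfies the same recursion with equality. -/
theorem norm_add_pow_sub_pow_sub_sum_le {u : R} (hu : ∀ k, ‖u ^ k‖ ≤ 1) (b : R) (m : ℕ) :
    ‖(u + b) ^ m - u ^ m - ∑ k ∈ range m, u ^ k * b * u ^ (m - 1 - k)‖ ≤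
      (1 + ‖b‖) ^ m - 1 - m * ‖b‖ := by
  induction m with
  | zero => simp
  | succ m ih =>
    have hrec : (u + b) ^ (m + 1) - u ^ (m + 1) -
        ∑ k ∈ range (m + 1), u ^ k * b * u ^ (m + 1 - 1 - k) =
        ((u + b) ^ m - u ^ m - ∑ k ∈ range m, u ^ k * b * u ^ (m - 1 - k)) * (u + b) +
          (∑ k ∈ range m, u ^ k * b * u ^ (m - 1 - k)) * b := by
      rw [sum_range_succ_pow_mul_mul_pow, pow_succ, pow_succ]
      noncomm_ring
    have hub : ‖u + b‖ ≤ 1 + ‖b‖ := (norm_add_le _ _).trans (by simpa using hu 1)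
    have hS := norm_sum_pow_mul_mul_pow_le hu b m
    rw [hrec]
    calc _ ≤ ((1 + ‖b‖) ^ m - 1 - m * ‖b‖) * (1 + ‖b‖) + m * ‖b‖ * ‖b‖ := by
          refine (norm_add_le _ _).trans (add_le_add ?_ ?_) <;>
            refine (norm_mul_le _ _).trans (mul_le_mul ‹_› ?_ (norm_nonneg _) ?_)
          exacts [hub, (norm_nonneg _).trans ih, le_rfl, by positivity]
      _ = _ := by push_cast; ring

end NormedRing

theorem one_add_pow_sub_one_sub_mul_le_sq {x : ℝ} (hx : 0 ≤ x) {m : ℕ} (hmx : m * x ≤ 1) :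
    (1 + x) ^ m - 1 - m * x ≤ (m * x) ^ 2 := by
  have hpow : (1 + x) ^ m ≤ Real.exp (m * x) := by
    rw [Real.exp_nat_mul]
    gcongr
    linarith [Real.add_one_le_exp x]
  have hexp := (abs_le.1 (Real.abs_exp_sub_one_sub_id_le (x := m * x)
    (by rw [abs_of_nonneg (by positivity)]; exact hmx))).2
  linarith

theorem CStarRing.norm_le_one_of_mem_unitary {E : Type*} [NormedRing E] [StarRing E]
    [CStarRing E] {U : E} (hU : U ∈ unitary E) : ‖U‖ ≤ 1 := by
  cases subsingleton_or_nontrivial E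
  · simp [Subsingleton.elim U 0]
  · exact (norm_of_mem_unitary hU).le

theorem Matrix.inv_pow_mul_pow_of_mem_unitaryGroup {n α : Type*} [Fintype n] [DecidableEq n]
    [CommRing α] [StarRing α] {U : Matrix n n α} (hU : U ∈ unitaryGroup n α) {k m : ℕ} (hkm : k ≤ m) :
    U⁻¹ ^ k * U ^ m = U ^ (m - k) := by
  rw [inv_eq_left_inv (Unitary.star_mul_self_of_mem hU), ← Nat.add_sub_cancel' hkm, pow_add,
    ← mul_assoc, ← star_pow, Unitary.star_mul_self_of_mem (pow_mem hU k), one_mul,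
    Nat.add_sub_cancel_left]

theorem trotter_remainder_bound_general {d : ℕ} (U δ : Matrix (Fin d) (Fin d) ℂ)
    (hU : U ∈ Matrix.unitaryGroup (Fin d) ℂ)
    (r : ℕ) (h : (r : ℝ) * ‖δ‖ < 1) :
    ‖(U + δ) ^ r - U ^ r -
        (∑ k ∈ Finset.range r, U ^ k * δ * U⁻¹ ^ k) * U ^ (r - 1)‖ ≤
      Real.exp 1 / 2 * (r : ℝ) ^ 2 * ‖δ‖ ^ 2 := by
  have hsum : (∑ k ∈ range r, U ^ k * δ * U⁻¹ ^ k) * U ^ (r - 1) =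
      ∑ k ∈ range r, U ^ k * δ * U ^ (r - 1 - k) := by
    rw [sum_mul]
    refine sum_congr rfl fun k hk => ?_
    rw [mul_assoc, inv_pow_mul_pow_of_mem_unitaryGroup hU (by have := mem_range.1 hk; omega)]
  have hpow k : ‖U ^ k‖ ≤ 1 := CStarRing.norm_le_one_of_mem_unitary (pow_mem hU k)
  have he : 2 ≤ Real.exp 1 := by linarith [Real.add_one_le_exp 1]
  rw [hsum]
  calc _ ≤ (1 + ‖δ‖) ^ r - 1 - r * ‖δ‖ := norm_add_pow_sub_pow_sub_sum_le hpow δ r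
    _ ≤ (r * ‖δ‖) ^ 2 := one_add_pow_sub_one_sub_mul_le_sq (norm_nonneg δ) h.le
    _ ≤ _ := by rw [mul_pow]; nlinarith [mul_nonneg (sq_nonneg (r : ℝ)) (sq_nonneg ‖δ‖)]

/-- For a unitary `U` and bounded operator `δ` with `r‖δ‖ < 1`, the remainder of
`(U+δ)^r` after subtracting `U^r` and the first-order error term is bounded by
`(e/2) r² ‖δ‖²` in the spectral norm. -/
theorem trotter_remainder_bound {d : ℕ} (U δ : Matrix (Fin d) (Fin d) ℂ)
    (hU : U ∈ Matrix.unitaryGroup (Fin d) ℂ)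
    (r : ℕ) (hr : 0 < r) (h : (r : ℝ) * ‖δ‖ < 1) :
    ‖(U + δ) ^ r - U ^ r -
        (∑ k ∈ Finset.range r, U ^ k * δ * U⁻¹ ^ k) * U ^ (r - 1)‖ ≤
      Real.exp 1 / 2 * (r : ℝ) ^ 2 * ‖δ‖ ^ 2 :=
  trotter_remainder_bound_general U δ hU r h
end

section
/- Let H be Hermitian, t ∈ ℝ, τ > 0, r = t/τ a positive integer, δ_⊥ ∈ H_⊥ a matrix all of whose nonzero matrix elements ⟨i|δ_⊥|j⟩ occur at pairs with λ_i ≠ λ_j and e^{−iτ(λ_i−λ_j)} ≠ 1. Then ‖∑_{k=0}^{r−1} e^{−ikτH} δ_⊥ e^{ikτH} − (i/τ)(e^{−iHt} ad_H^{−1}(δ_⊥) e^{iHt} − ad_H^{−1}(δ_⊥))‖ ≤ C·‖δ_⊥‖ for a constant C independent of r (depending only on the spectral gaps of H and an upper bound on τ). -/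
open Matrix Finset
open scoped Matrix.Norms.L2Operator

/-!
In the eigenbasis of `H`, conjugation by `e^{-ikτH}` multiplies the `(i, j)` component of `δ`
by `z^k`, where `z = e^{-iτ(λ_i - λ_j)}` has modulus one and, by non-resonance, `z ≠ 1`.
Summing over `k < r` gives `(z^r - 1)/(z - 1)`, while the `ad_H⁻¹` term contributes
`(i/τ)(z^r - 1)/(λ_i - λ_j)`; their difference `(z^r - 1)((z - 1)⁻¹ - i/(τ(λ_i - λ_j)))` is bounded
independently of `r` because `|z^r - 1| ≤ 2`. Each component `⟨v_i|δ|v_j⟩` is a linear functional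
of `δ` on a finite-dimensional space, hence bounded by a multiple of `‖δ‖`.
-/

theorem norm_geom_sum_sub_mul_pow_sub_one_le {𝕜 : Type*} [NormedField 𝕜] {z : 𝕜}
    (hz : ‖z‖ = 1) (hz1 : z ≠ 1) (a : 𝕜) (r : ℕ) :
    ‖∑ k ∈ range r, z ^ k - a * (z ^ r - 1)‖ ≤ 2 * ‖(z - 1)⁻¹ - a‖ := by
  have hfactor : ∑ k ∈ range r, z ^ k - a * (z ^ r - 1) = (z ^ r - 1) * ((z - 1)⁻¹ - a) := by
    rw [geom_sum_eq hz1]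
    ring
  have hpow : ‖z ^ r - 1‖ ≤ 2 := by
    calc ‖z ^ r - 1‖ ≤ ‖z ^ r‖ + ‖(1 : 𝕜)‖ := norm_sub_le _ _
      _ = 2 := by rw [norm_pow, hz, one_pow, norm_one]; norm_num
  rw [hfactor, norm_mul]
  exact mul_le_mul_of_nonneg_right hpow (norm_nonneg _)

namespace Matrix

def ofCols {m n α : Type*} (v : n → m → α) : Matrix m n α := (of v)ᵀ

@[simp]
theorem ofCols_apply {m n α : Type*} (v : n → m → α) (a : m) (i : n) : ofCols v a i = v i a := rfl

variable {n : Type*} [Fintype n] [DecidableEq n] {v : n → n → ℂ}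

theorem conjTranspose_ofCols_mul_ofCols
    (horth : ∀ i j, star (v i) ⬝ᵥ v j = if i = j then 1 else 0) :
    (ofCols v)ᴴ * ofCols v = 1 := by
  ext i j
  simpa [mul_apply, one_apply, dotProduct, mul_comm] using horth i j

theorem ofCols_mul_conjTranspose_ofCols
    (horth : ∀ i j, star (v i) ⬝ᵥ v j = if i = j then 1 else 0) :
    ofCols v * (ofCols v)ᴴ = 1 :=
  mul_eq_one_comm.mp (conjTranspose_ofCols_mul_ofCols horth)

theorem vecMulVec_eq_ofCols_mul_single_mul (i j : n) :
    vecMulVec (v i) (star (v j)) = ofCols v * single i j 1 * (ofCols v)ᴴ := by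
  ext a b
  simp [mul_apply, vecMulVec_apply, single, ite_and, Finset.sum_ite_eq]

theorem eq_sum_smul_vecMulVec_of_orthonormal
    (horth : ∀ i j, star (v i) ⬝ᵥ v j = if i = j then 1 else 0) (δ : Matrix n n ℂ) :
    δ = ∑ p : n × n, (star (v p.1) ⬝ᵥ δ *ᵥ v p.2) • vecMulVec (v p.1) (star (v p.2)) := by
  set U := ofCols v
  have hentry : ∀ i j, (Uᴴ * δ * U) i j = star (v i) ⬝ᵥ δ *ᵥ v j := by
    intro i j
    simp only [U, mul_apply, conjTranspose_apply, ofCols_apply, mulVec, dotProduct,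
      Pi.star_apply, Finset.sum_mul, Finset.mul_sum]
    rw [Finset.sum_comm]
    exact Finset.sum_congr rfl fun x _ => Finset.sum_congr rfl fun y _ => by ring
  calc δ = U * (Uᴴ * δ * U) * Uᴴ := by
        simp only [← Matrix.mul_assoc, U, ofCols_mul_conjTranspose_ofCols horth, Matrix.one_mul]
        rw [Matrix.mul_assoc, ofCols_mul_conjTranspose_ofCols horth, Matrix.mul_one]
    _ = _ := by
        conv_lhs => rw [matrix_eq_sum_single (Uᴴ * δ * U)]
        rw [← Finset.sum_product', Finset.mul_sum, Finset.sum_mul]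
        refine Finset.sum_congr rfl fun p _ => ?_
        rw [hentry, vecMulVec_eq_ofCols_mul_single_mul, ← Matrix.smul_mul, ← Matrix.mul_smul,
          smul_single, smul_eq_mul, mul_one]

variable {H : Matrix n n ℂ} {μ : n → ℝ}

theorem eq_ofCols_mul_diagonal_mul
    (horth : ∀ i j, star (v i) ⬝ᵥ v j = if i = j then 1 else 0)
    (heig : ∀ i, H *ᵥ v i = (μ i : ℂ) • v i) :
    H = ofCols v * diagonal (fun i => (μ i : ℂ)) * (ofCols v)ᴴ := by
  have hHU : H * ofCols v = ofCols v * diagonal (fun i => (μ i : ℂ)) := by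
    ext a j
    simpa [mul_apply, mulVec, diagonal, dotProduct, mul_comm] using congrFun (heig j) a
  rw [← hHU, Matrix.mul_assoc, ofCols_mul_conjTranspose_ofCols horth, Matrix.mul_one]

theorem exp_smul_eq_ofCols_mul_diagonal_mul
    (horth : ∀ i j, star (v i) ⬝ᵥ v j = if i = j then 1 else 0)
    (heig : ∀ i, H *ᵥ v i = (μ i : ℂ) • v i) (c : ℂ) :
    NormedSpace.exp (c • H) =
      ofCols v * diagonal (fun i => Complex.exp (c * μ i)) * (ofCols v)ᴴ := by
  have hinv : (ofCols v)⁻¹ = (ofCols v)ᴴ :=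
    inv_eq_right_inv (ofCols_mul_conjTranspose_ofCols horth)
  have hunit : IsUnit (ofCols v) :=
    ⟨⟨_, _, ofCols_mul_conjTranspose_ofCols horth, conjTranspose_ofCols_mul_ofCols horth⟩, rfl⟩
  rw [eq_ofCols_mul_diagonal_mul horth heig, ← Matrix.smul_mul, ← Matrix.mul_smul,
    ← diagonal_smul, ← hinv, exp_conj _ _ hunit, exp_diagonal]
  congr 3
  funext i
  simp [Complex.exp_eq_exp_ℂ]

theorem exp_neg_smul_mul_vecMulVec_mul_exp_smul
    (horth : ∀ i j, star (v i) ⬝ᵥ v j = if i = j then 1 else 0)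
    (heig : ∀ i, H *ᵥ v i = (μ i : ℂ) • v i) (s : ℂ) (i j : n) :
    NormedSpace.exp ((-s) • H) * vecMulVec (v i) (star (v j)) * NormedSpace.exp (s • H) =
      Complex.exp (-(s * ((μ i : ℂ) - μ j))) • vecMulVec (v i) (star (v j)) := by
  have hmid : diagonal (fun k => Complex.exp (-s * μ k)) * single i j 1 *
      diagonal (fun k => Complex.exp (s * μ k)) =
      Complex.exp (-(s * ((μ i : ℂ) - μ j))) • single i j 1 := by
    ext x y
    simp only [diagonal_mul, mul_diagonal, smul_apply, single_apply, smul_eq_mul]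
    split_ifs with h
    · obtain ⟨rfl, rfl⟩ := h
      rw [mul_one, mul_one, ← Complex.exp_add]
      ring_nf
    · ring
  have hcancel : ∀ X, (ofCols v)ᴴ * (ofCols v * X) = X := fun X => by
    rw [← Matrix.mul_assoc, conjTranspose_ofCols_mul_ofCols horth, Matrix.one_mul]
  rw [exp_smul_eq_ofCols_mul_diagonal_mul horth heig,
    exp_smul_eq_ofCols_mul_diagonal_mul horth heig, vecMulVec_eq_ofCols_mul_single_mul,
    ← Matrix.smul_mul, ← Matrix.mul_smul, ← hmid]
  simp only [Matrix.mul_assoc, hcancel]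

theorem exists_norm_dotProduct_mulVec_le (u w : n → ℂ) :
    ∃ K ≥ 0, ∀ δ : Matrix n n ℂ, ‖star u ⬝ᵥ δ *ᵥ w‖ ≤ K * ‖δ‖ := by
  let f : Matrix n n ℂ →ₗ[ℂ] ℂ :=
    { toFun := fun δ => star u ⬝ᵥ δ *ᵥ w
      map_add' := fun x y => by simp [add_mulVec, dotProduct_add]
      map_smul' := fun c x => by simp [smul_mulVec, dotProduct_smul] }
  exact ⟨‖LinearMap.toContinuousLinearMap f‖, norm_nonneg _,
    (LinearMap.toContinuousLinearMap f).le_opNorm⟩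

theorem exp_neg_smul_mul_sum_smul_vecMulVec_mul_exp_smul
    (horth : ∀ i j, star (v i) ⬝ᵥ v j = if i = j then 1 else 0)
    (heig : ∀ i, H *ᵥ v i = (μ i : ℂ) • v i) (s : ℂ) (S : Finset (n × n)) (a : n × n → ℂ) :
    NormedSpace.exp ((-s) • H) * (∑ p ∈ S, a p • vecMulVec (v p.1) (star (v p.2))) *
        NormedSpace.exp (s • H) =
      ∑ p ∈ S, (a p * Complex.exp (-(s * ((μ p.1 : ℂ) - μ p.2)))) •
        vecMulVec (v p.1) (star (v p.2)) := by
  rw [Finset.mul_sum, Finset.sum_mul]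
  refine Finset.sum_congr rfl fun p _ => ?_
  rw [mul_smul_comm, smul_mul_assoc, exp_neg_smul_mul_vecMulVec_mul_exp_smul horth heig,
    smul_smul]

/-- `ad_H⁻¹ δ`, written in the eigenbasis `v` of `H`. -/
noncomputable def eigenAdInv (v : n → n → ℂ) (μ : n → ℝ) (δ : Matrix n n ℂ) : Matrix n n ℂ :=
  ∑ p ∈ univ.filter (fun p : n × n => μ p.1 ≠ μ p.2),
    (((μ p.1 : ℂ) - μ p.2)⁻¹ * (star (v p.1) ⬝ᵥ δ *ᵥ v p.2)) • vecMulVec (v p.1) (star (v p.2))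

theorem eq_sum_filter_smul_vecMulVec
    (horth : ∀ i j, star (v i) ⬝ᵥ v j = if i = j then 1 else 0) (δ : Matrix n n ℂ)
    (hδ : ∀ i j, μ i = μ j → star (v i) ⬝ᵥ δ *ᵥ v j = 0) :
    δ = ∑ p ∈ univ.filter (fun p : n × n => μ p.1 ≠ μ p.2),
      (star (v p.1) ⬝ᵥ δ *ᵥ v p.2) • vecMulVec (v p.1) (star (v p.2)) := by
  refine (eq_sum_smul_vecMulVec_of_orthonormal horth δ).trans
    (Finset.sum_subset (Finset.filter_subset _ _) fun p _ hp => ?_).symm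
  rw [hδ p.1 p.2 (by simpa using hp), zero_smul]

theorem sum_conj_sub_smul_conj_eigenAdInv_eq
    (horth : ∀ i j, star (v i) ⬝ᵥ v j = if i = j then 1 else 0)
    (heig : ∀ i, H *ᵥ v i = (μ i : ℂ) • v i) (τ : ℝ) (r : ℕ) (δ : Matrix n n ℂ)
    (hδ : ∀ i j, μ i = μ j → star (v i) ⬝ᵥ δ *ᵥ v j = 0) :
    (∑ k ∈ range r, NormedSpace.exp ((-(Complex.I * k * τ)) • H) * δ *
        NormedSpace.exp ((Complex.I * k * τ) • H)) -
      (Complex.I / τ) • (NormedSpace.exp ((-(Complex.I * (r * τ))) • H) * eigenAdInv v μ δ *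
        NormedSpace.exp ((Complex.I * (r * τ)) • H) - eigenAdInv v μ δ) =
    ∑ p ∈ univ.filter (fun p : n × n => μ p.1 ≠ μ p.2),
      ((star (v p.1) ⬝ᵥ δ *ᵥ v p.2) *
        (∑ k ∈ range r, Complex.exp (-(Complex.I * τ * ((μ p.1 : ℂ) - μ p.2))) ^ k -
          Complex.I / τ * ((μ p.1 : ℂ) - μ p.2)⁻¹ *
            (Complex.exp (-(Complex.I * τ * ((μ p.1 : ℂ) - μ p.2))) ^ r - 1))) •
        vecMulVec (v p.1) (star (v p.2)) := by
  have hpow : ∀ (k : ℕ) (x : ℂ), Complex.exp (-(Complex.I * τ * x)) ^ k =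
      Complex.exp (-(Complex.I * k * τ * x)) := fun k x => by
    rw [← Complex.exp_nat_mul]; ring_nf
  conv_lhs => enter [1, 2, k]; rw [eq_sum_filter_smul_vecMulVec horth δ hδ]
  simp only [eigenAdInv, exp_neg_smul_mul_sum_smul_vecMulVec_mul_exp_smul horth heig]
  rw [Finset.sum_comm, ← Finset.sum_sub_distrib, Finset.smul_sum, ← Finset.sum_sub_distrib]
  refine Finset.sum_congr rfl fun p _ => ?_
  rw [← Finset.sum_smul, ← sub_smul, smul_smul, ← sub_smul]
  congr 1
  simp only [hpow]
  rw [← mul_assoc Complex.I, mul_sub (star (v p.1) ⬝ᵥ δ *ᵥ v p.2), Finset.mul_sum]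
  ring

end Matrix

theorem accumulated_error_near_rotation_general {d : ℕ}
    (H : Matrix (Fin d) (Fin d) ℂ)
    (v : Fin d → (Fin d → ℂ)) (μ : Fin d → ℝ)
    (horth : ∀ i j, star (v i) ⬝ᵥ v j = if i = j then 1 else 0)
    (heig : ∀ i, H.mulVec (v i) = (μ i : ℂ) • v i)
    (τ : ℝ)
    (hres : ∀ i j, μ i ≠ μ j →
      Complex.exp (-(Complex.I * (τ : ℂ) * ((μ i : ℂ) - (μ j : ℂ)))) ≠ 1) :
    ∃ C > (0 : ℝ), ∀ r : ℕ, 0 < r →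
      ∀ δ : Matrix (Fin d) (Fin d) ℂ,
        (∀ i j, μ i = μ j → star (v i) ⬝ᵥ δ.mulVec (v j) = 0) →
        ‖(∑ k ∈ Finset.range r,
            NormedSpace.exp ((-(Complex.I * (k : ℂ) * (τ : ℂ))) • H) * δ *
              NormedSpace.exp ((Complex.I * (k : ℂ) * (τ : ℂ)) • H)) -
          (Complex.I / (τ : ℂ)) •
            (NormedSpace.exp ((-(Complex.I * ((r : ℂ) * (τ : ℂ)))) • H) *
                (∑ p ∈ Finset.univ.filter (fun p : Fin d × Fin d => μ p.1 ≠ μ p.2),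
                  (((μ p.1 : ℂ) - (μ p.2 : ℂ))⁻¹ *
                    (star (v p.1) ⬝ᵥ δ.mulVec (v p.2))) •
                      vecMulVec (v p.1) (star (v p.2))) *
                NormedSpace.exp ((Complex.I * ((r : ℂ) * (τ : ℂ))) • H) -
              ∑ p ∈ Finset.univ.filter (fun p : Fin d × Fin d => μ p.1 ≠ μ p.2),
                (((μ p.1 : ℂ) - (μ p.2 : ℂ))⁻¹ *
                  (star (v p.1) ⬝ᵥ δ.mulVec (v p.2))) •
                    vecMulVec (v p.1) (star (v p.2)))‖ ≤ C * ‖δ‖ := by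
  set S := Finset.univ.filter (fun p : Fin d × Fin d => μ p.1 ≠ μ p.2)
  set z : Fin d × Fin d → ℂ := fun p => Complex.exp (-(Complex.I * τ * ((μ p.1 : ℂ) - μ p.2)))
  set E : Fin d × Fin d → Matrix (Fin d) (Fin d) ℂ := fun p => vecMulVec (v p.1) (star (v p.2))
  set B : Fin d × Fin d → ℝ := fun p => 2 * ‖(z p - 1)⁻¹ - Complex.I / τ * ((μ p.1 : ℂ) - μ p.2)⁻¹‖
  choose K hK0 hK using fun p : Fin d × Fin d => exists_norm_dotProduct_mulVec_le (v p.1) (v p.2)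
  have hB : 0 ≤ ∑ p ∈ S, K p * B p * ‖E p‖ :=
    Finset.sum_nonneg fun p _ => by have := hK0 p; positivity
  refine ⟨1 + ∑ p ∈ S, K p * B p * ‖E p‖, add_pos_of_pos_of_nonneg one_pos hB,
    fun r _ δ hδ => ?_⟩
  have hz : ∀ p, ‖z p‖ = 1 := fun p => by simp [z, Complex.norm_exp]
  rw [← eigenAdInv, sum_conj_sub_smul_conj_eigenAdInv_eq horth heig τ r δ hδ]
  calc _ ≤ ∑ p ∈ S, K p * ‖δ‖ * B p * ‖E p‖ := by
        refine (norm_sum_le _ _).trans (Finset.sum_le_sum fun p hp => ?_)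
        rw [norm_smul, norm_mul]
        have := hK0 p
        gcongr ?_ * ?_ * _
        · exact hK p δ
        · exact norm_geom_sum_sub_mul_pow_sub_one_le (hz p) (hres _ _ (by simpa using hp)) _ r
    _ = (∑ p ∈ S, K p * B p * ‖E p‖) * ‖δ‖ := by
        rw [Finset.sum_mul]
        exact Finset.sum_congr rfl fun p _ => by ring
    _ ≤ (1 + ∑ p ∈ S, K p * B p * ‖E p‖) * ‖δ‖ := by
        gcongr
        linarith

/-- For Hermitian `H` with orthonormal eigenbasis `v`, eigenvalues `μ`, and a fixed
step size `τ > 0` non-resonant with the spectral gaps, there is a constant `C`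
independent of the number of steps `r` such that, for every `δ_⊥` supported on pairs
with distinct eigenvalues, the accumulated error differs from
`(i/τ)(e^{−iHt} ad_H^{−1}(δ_⊥) e^{iHt} − ad_H^{−1}(δ_⊥))` (with `t = rτ`) by at most
`C‖δ_⊥‖` in spectral norm. -/
theorem accumulated_error_near_rotation {d : ℕ}
    (H : Matrix (Fin d) (Fin d) ℂ) (hH : H.IsHermitian)
    (v : Fin d → (Fin d → ℂ)) (μ : Fin d → ℝ)
    (horth : ∀ i j, star (v i) ⬝ᵥ v j = if i = j then 1 else 0)
    (heig : ∀ i, H.mulVec (v i) = (μ i : ℂ) • v i)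
    (τ : ℝ) (hτ : 0 < τ)
    (hres : ∀ i j, μ i ≠ μ j →
      Complex.exp (-(Complex.I * (τ : ℂ) * ((μ i : ℂ) - (μ j : ℂ)))) ≠ 1) :
    ∃ C > (0 : ℝ), ∀ r : ℕ, 0 < r →
      ∀ δ : Matrix (Fin d) (Fin d) ℂ,
        (∀ i j, μ i = μ j → star (v i) ⬝ᵥ δ.mulVec (v j) = 0) →
        ‖(∑ k ∈ Finset.range r,
            NormedSpace.exp ((-(Complex.I * (k : ℂ) * (τ : ℂ))) • H) * δ *
              NormedSpace.exp ((Complex.I * (k : ℂ) * (τ : ℂ)) • H)) -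
          (Complex.I / (τ : ℂ)) •
            (NormedSpace.exp ((-(Complex.I * ((r : ℂ) * (τ : ℂ)))) • H) *
                (∑ p ∈ Finset.univ.filter (fun p : Fin d × Fin d => μ p.1 ≠ μ p.2),
                  (((μ p.1 : ℂ) - (μ p.2 : ℂ))⁻¹ *
                    (star (v p.1) ⬝ᵥ δ.mulVec (v p.2))) •
                      vecMulVec (v p.1) (star (v p.2))) *
                NormedSpace.exp ((Complex.I * ((r : ℂ) * (τ : ℂ))) • H) -
              ∑ p ∈ Finset.univ.filter (fun p : Fin d × Fin d => μ p.1 ≠ μ p.2),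
                (((μ p.1 : ℂ) - (μ p.2 : ℂ))⁻¹ *
                  (star (v p.1) ⬝ᵥ δ.mulVec (v p.2))) •
                    vecMulVec (v p.1) (star (v p.2)))‖ ≤ C * ‖δ‖ :=
  accumulated_error_near_rotation_general H v μ horth heig τ hres
end
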